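/- The pointwise product of a finite type function of degree ≤ m and a finite type function of degree ≤ n on a group G is a finite type function of degree ≤ m + n. -/

import Mathlib

/-! The coproduct `Δ : R[G] → R[G] ⊗ R[G]`, `g ↦ g ⊗ g`, is an algebra map, and
`Δ x - 1 ⊗ x = ∑ r_g (g - 1) ⊗ g` for `x = ∑ r_g g`, so `Δ` sends `I` into `I ⊗ R[G] + R[G] ⊗ I`
and hence, by multiplicativity, `I^k` into the span of the `I^i ⊗ I^j` with `i + j = k`.
The linear extension of `f g` is `x ↦ μ ((f ⊗ g) (Δ x))` with `μ` the multiplication of `R`,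
and when `i + j = m + n + 1` either `i > m` or `j > n`, so `f ⊗ g` kills each `I^i ⊗ I^j`. -/

noncomputable def augIdeal (R G : Type*) [CommRing R] [Group G] : Ideal (MonoidAlgebra R G) :=
  RingHom.ker ((MonoidAlgebra.lift R R G) 1)

noncomputable def linExt {R G : Type*} [CommRing R] [Group G] (f : G → R) :
    MonoidAlgebra R G →ₗ[R] R :=
  (Finsupp.linearCombination R f).comp (MonoidAlgebra.coeffLinearEquiv R).toLinearMap

def FiniteType (R : Type*) {G : Type*} [CommRing R] [Group G] (n : ℕ) (f : G → R) : Prop :=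
  ∀ x ∈ (augIdeal R G) ^ (n + 1), linExt f x = 0

open TensorProduct

section

variable {R G : Type*} [CommRing R] [Group G]

local notation "Δ" => Bialgebra.comulAlgHom R (MonoidAlgebra R G)

namespace augIdeal

instance isTwoSided : (augIdeal R G).IsTwoSided :=
  inferInstanceAs (RingHom.ker _).IsTwoSided

lemma single_one_sub_one_mem (g : G) :
    (MonoidAlgebra.single g 1 - 1 : MonoidAlgebra R G) ∈ augIdeal R G := by
  simp [augIdeal, MonoidAlgebra.lift_single]

lemma mem_pow_zero (a : MonoidAlgebra R G) : a ∈ augIdeal R G ^ 0 := by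
  simp [Submodule.pow_zero, Ideal.one_eq_top]

lemma mul_mem_pow_add {i j : ℕ} {a b : MonoidAlgebra R G}
    (ha : a ∈ augIdeal R G ^ i) (hb : b ∈ augIdeal R G ^ j) :
    a * b ∈ augIdeal R G ^ (i + j) := by
  rw [Ideal.IsTwoSided.pow_add]
  exact Ideal.mul_mem_mul ha hb

variable (R G) in
noncomputable def tensorFiltration (k : ℕ) :
    Submodule R (MonoidAlgebra R G ⊗[R] MonoidAlgebra R G) :=
  Submodule.span R {z | ∃ i j, i + j = k ∧
    ∃ a ∈ augIdeal R G ^ i, ∃ b ∈ augIdeal R G ^ j, a ⊗ₜ b = z}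

lemma tmul_mem_tensorFiltration {i j k : ℕ} {a b : MonoidAlgebra R G}
    (ha : a ∈ augIdeal R G ^ i) (hb : b ∈ augIdeal R G ^ j) (hk : i + j = k) :
    a ⊗ₜ b ∈ tensorFiltration R G k :=
  Submodule.subset_span ⟨i, j, hk, a, ha, b, hb, rfl⟩

lemma tensorFiltration_zero : tensorFiltration R G 0 = ⊤ := by
  rw [eq_top_iff, ← TensorProduct.span_tmul_eq_top R (MonoidAlgebra R G) (MonoidAlgebra R G),
    Submodule.span_le]
  rintro _ ⟨a, b, rfl⟩
  exact tmul_mem_tensorFiltration (mem_pow_zero a) (mem_pow_zero b) rfl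

lemma tensorFiltration_mul_le (i j : ℕ) :
    tensorFiltration R G i * tensorFiltration R G j ≤ tensorFiltration R G (i + j) := by
  rw [tensorFiltration, tensorFiltration, Submodule.span_mul_span, Submodule.span_le]
  rintro _ ⟨_, ⟨i₁, j₁, rfl, a, ha, b, hb, rfl⟩, _, ⟨i₂, j₂, rfl, c, hc, d, hd, rfl⟩, rfl⟩
  dsimp only
  rw [Algebra.TensorProduct.tmul_mul_tmul]
  exact tmul_mem_tensorFiltration (mul_mem_pow_add ha hc) (mul_mem_pow_add hb hd) (by omega)

lemma comul_sub_one_tmul_mem_tensorFiltration_one (x : MonoidAlgebra R G) :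
    Δ x - 1 ⊗ₜ x ∈ tensorFiltration R G 1 := by
  induction x using MonoidAlgebra.induction_linear with
  | zero => simp
  | add a b ha hb =>
    convert add_mem ha hb using 1
    rw [map_add, tmul_add]
    abel
  | single g r =>
    have hsplit : Δ (MonoidAlgebra.single g r) - 1 ⊗ₜ MonoidAlgebra.single g r =
        (MonoidAlgebra.single g 1 - 1) ⊗ₜ MonoidAlgebra.single g r := by
      simp [sub_tmul]
    rw [hsplit]
    exact tmul_mem_tensorFiltration
      ((Submodule.pow_one (augIdeal R G)).symm ▸ single_one_sub_one_mem g) (mem_pow_zero _) rfl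

lemma comul_mem_tensorFiltration_one {x : MonoidAlgebra R G} (hx : x ∈ augIdeal R G) :
    Δ x ∈ tensorFiltration R G 1 := by
  have h1x : 1 ⊗ₜ x ∈ tensorFiltration R G 1 :=
    tmul_mem_tensorFiltration (mem_pow_zero 1) ((Submodule.pow_one (augIdeal R G)).symm ▸ hx) rfl
  simpa using add_mem (comul_sub_one_tmul_mem_tensorFiltration_one x) h1x

lemma comul_mem_tensorFiltration {k : ℕ} {x : MonoidAlgebra R G}
    (hx : x ∈ augIdeal R G ^ k) : Δ x ∈ tensorFiltration R G k := by
  induction k generalizing x with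
  | zero => simp [tensorFiltration_zero]
  | succ k ih =>
    rw [Submodule.pow_succ] at hx
    induction hx using Submodule.mul_induction_on' with
    | mem_mul_mem a ha b hb =>
      rw [map_mul]
      exact tensorFiltration_mul_le k 1
        (Submodule.mul_mem_mul (ih ha) (comul_mem_tensorFiltration_one hb))
    | add y _ z _ hy hz =>
      rw [map_add]
      exact add_mem hy hz

end augIdeal

lemma linExt_single (f : G → R) (g : G) (r : R) :
    linExt f (MonoidAlgebra.single g r) = r * f g := by
  simp [linExt]

lemma linExt_mul_eq_mul'_map_comul (f g : G → R) (x : MonoidAlgebra R G) :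
    linExt (fun t => f t * g t) x =
      LinearMap.mul' R R (TensorProduct.map (linExt f) (linExt g) (Δ x)) := by
  induction x using MonoidAlgebra.induction_linear with
  | zero => simp
  | add a b ha hb => simp only [map_add, ha, hb]
  | single t r => simp [linExt_single, mul_left_comm]

namespace FiniteType

lemma linExt_eq_zero {n i : ℕ} {f : G → R} (hf : FiniteType R n f) (hi : n < i)
    {x : MonoidAlgebra R G} (hx : x ∈ augIdeal R G ^ i) : linExt f x = 0 :=
  hf x (Ideal.pow_le_pow_right hi hx)

lemma tensorFiltration_le_ker {m n : ℕ} {f g : G → R}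
    (hf : FiniteType R m f) (hg : FiniteType R n g) :
    augIdeal.tensorFiltration R G (m + n + 1) ≤
      LinearMap.ker (LinearMap.mul' R R ∘ₗ TensorProduct.map (linExt f) (linExt g)) := by
  rw [augIdeal.tensorFiltration, Submodule.span_le]
  rintro _ ⟨i, j, hij, a, ha, b, hb, rfl⟩
  rw [SetLike.mem_coe, LinearMap.mem_ker, LinearMap.comp_apply, map_tmul, LinearMap.mul'_apply]
  rcases lt_or_ge m i with hi | hi
  · rw [hf.linExt_eq_zero hi ha, zero_mul]
  · rw [hg.linExt_eq_zero (by omega) hb, mul_zero]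

end FiniteType

end

/-- The pointwise product of finite type functions of degrees ≤ m and ≤ n
has finite type degree ≤ m + n. -/
theorem finiteType_mul (R G : Type*) [CommRing R] [Group G]
    (m n : ℕ) (f g : G → R) (hf : FiniteType R m f) (hg : FiniteType R n g) :
    FiniteType R (m + n) (fun x => f x * g x) := by
  intro x hx
  rw [linExt_mul_eq_mul'_map_comul]
  exact hf.tensorFiltration_le_ker hg (augIdeal.comul_mem_tensorFiltration hx)
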